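/- There exists a constant C* > 0, depending only on C_TAME, such that for every a ≥ C* the following holds: there exists δ > 0 (depending on a and T) such that for every tame discrete controlled process with parameter a as in the context with Δt_MAX < δ, and every 0 ≤ ν < N, one has E[q_{ν+1}²] ≥ exp((1/2)·a·Δt_ν)·E[q_ν²] + (1/2)·Δt_ν. -/

import Mathlib

/-!
Write `E = exp (a Δt)`. One step of the scheme reads `q_{ν+1} = E q_ν + Δt* u_ν + ΔW_ν`, where
`ΔW_ν` is a centred Gaussian of variance `Δt~` independent of the `F_ν`-measurable part, so
`E[q_{ν+1}²] = E[(E q_ν + Δt* u_ν)²] + Δt~`. Young's inequality with weight `a Δt / 2`, together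
with `Δt* ≤ Δt E` and the tameness bound `u² ≤ 2 C² (q² + 1)`, shows that once `a ≥ 16 (C² + 1)`
the control removes at most the fraction `3 a Δt / 4` of the expansion `E²`, at an additive cost
of at most `Δt / 2`, while `Δt~ ≥ Δt`. Since `(1 - 3x/4) e^{2x} ≥ e^{x/2}` for `0 ≤ x ≤ 2/3`,
this gives the claim with `δ = log 2 / (2a)`, which also keeps `E² ≤ 2`.
-/

open MeasureTheory ProbabilityTheory Real

noncomputable def dtStar (a dt : ℝ) : ℝ := if a = 0 then dt else (Real.exp (a * dt) - 1) / a

noncomputable def dtTilde (a dt : ℝ) : ℝ :=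
  if a = 0 then dt else (Real.exp (2 * a * dt) - 1) / (2 * a)

def IsPartition (N : ℕ) (T : ℝ) (t : ℕ → ℝ) : Prop :=
  t 0 = 0 ∧ t N = T ∧ ∀ ν < N, t ν < t (ν + 1)

noncomputable def dtMax (N : ℕ) (t : ℕ → ℝ) : ℝ := ⨆ ν : Fin N, (t (ν + 1) - t ν)

structure TameProcess {Ω : Type*} {mΩ : MeasurableSpace Ω} (μ : Measure Ω)
    (N : ℕ) (t : ℕ → ℝ) (a q0 Ct : ℝ) (F : Filtration ℕ mΩ)
    (q u ΔW : ℕ → Ω → ℝ) : Prop where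
  w_meas : ∀ ν < N, Measurable[F (ν + 1)] (ΔW ν)
  w_indep : ∀ ν < N, Indep (MeasurableSpace.comap (ΔW ν) inferInstance) (F ν) μ
  w_law : ∀ ν < N, μ.map (ΔW ν) = gaussianReal 0 (dtTilde a (t (ν + 1) - t ν)).toNNReal
  q_meas : ∀ ν ≤ N, Measurable[F ν] (q ν)
  u_meas : ∀ ν < N, Measurable[F ν] (u ν)
  q_init : ∀ᵐ ω ∂μ, q 0 ω = q0
  q_step : ∀ ν < N, ∀ᵐ ω ∂μ, q (ν + 1) ω =
      q ν ω + (a * q ν ω + u ν ω) * dtStar a (t (ν + 1) - t ν) + ΔW ν ω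
  u_tame : ∀ ν < N, ∀ᵐ ω ∂μ, |u ν ω| ≤ Ct * (|q ν ω| + 1)

noncomputable def zeta1 {Ω : Type*} (t : ℕ → ℝ) (q u : ℕ → Ω → ℝ) (ν : ℕ) (ω : Ω) : ℝ :=
  ∑ μ ∈ Finset.range ν, q μ ω * ((q (μ + 1) ω - q μ ω) - u μ ω * (t (μ + 1) - t μ))

noncomputable def zeta2 {Ω : Type*} (t : ℕ → ℝ) (q : ℕ → Ω → ℝ) (ν : ℕ) (ω : Ω) : ℝ :=
  ∑ μ ∈ Finset.range ν, (q μ ω) ^ 2 * (t (μ + 1) - t μ)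

open scoped NNReal

theorem integral_sq_gaussianReal (m : ℝ) (v : ℝ≥0) :
    ∫ x, x ^ 2 ∂gaussianReal m v = m ^ 2 + v := by
  have h := variance_eq_sub (memLp_id_gaussianReal (μ := m) (v := v) 2)
  simp only [variance_id_gaussianReal, id, integral_id_gaussianReal, Pi.pow_apply] at h
  linarith

theorem lintegral_sq_const_add_gaussianReal (c : ℝ) (v : ℝ≥0) :
    ∫⁻ x, ENNReal.ofReal ((c + x) ^ 2) ∂gaussianReal 0 v = ENNReal.ofReal (c ^ 2 + v) := by
  have hmap : (gaussianReal 0 v).map (c + ·) = gaussianReal c v := by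
    simpa using gaussianReal_map_const_add (μ := 0) (v := v) c
  calc ∫⁻ x, ENNReal.ofReal ((c + x) ^ 2) ∂gaussianReal 0 v
      = ∫⁻ x, ENNReal.ofReal (x ^ 2) ∂gaussianReal c v := by
        rw [← hmap, lintegral_map (by fun_prop) (by fun_prop)]
    _ = ENNReal.ofReal (c ^ 2 + v) := by
        rw [← integral_sq_gaussianReal]
        exact (ofReal_integral_eq_lintegral_ofReal (memLp_id_gaussianReal 2).integrable_sq
          (ae_of_all _ fun x => sq_nonneg x)).symm

section

variable {Ω : Type*} {mΩ : MeasurableSpace Ω} {μ : Measure Ω} [IsProbabilityMeasure μ]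

theorem lintegral_sq_add_of_indepFun_gaussianReal {X W : Ω → ℝ} (hX : Measurable X)
    (hW : Measurable W) (hXW : IndepFun X W μ) {v : ℝ≥0} (hW_law : μ.map W = gaussianReal 0 v) :
    ∫⁻ ω, ENNReal.ofReal ((X ω + W ω) ^ 2) ∂μ
      = ∫⁻ ω, ENNReal.ofReal (X ω ^ 2) ∂μ + ENNReal.ofReal v := by
  have hprod : μ.map (fun ω => (X ω, W ω)) = (μ.map X).prod (μ.map W) :=
    (indepFun_iff_map_prod_eq_prod_map_map hX.aemeasurable hW.aemeasurable).mp hXW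
  have : IsProbabilityMeasure (μ.map X) := Measure.isProbabilityMeasure_map hX.aemeasurable
  have hsum : Measurable fun p : ℝ × ℝ => ENNReal.ofReal ((p.1 + p.2) ^ 2) := by fun_prop
  calc ∫⁻ ω, ENNReal.ofReal ((X ω + W ω) ^ 2) ∂μ
      = ∫⁻ p, ENNReal.ofReal ((p.1 + p.2) ^ 2) ∂μ.map (fun ω => (X ω, W ω)) := by
        rw [lintegral_map hsum (hX.prodMk hW)]
    _ = ∫⁻ x, ENNReal.ofReal (x ^ 2 + v) ∂μ.map X := by
        rw [hprod, hW_law, lintegral_prod _ hsum.aemeasurable]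
        simp only [lintegral_sq_const_add_gaussianReal]
    _ = ∫⁻ ω, ENNReal.ofReal (X ω ^ 2) ∂μ + ENNReal.ofReal v := by
        simp only [ENNReal.ofReal_add (sq_nonneg _) v.coe_nonneg]
        rw [lintegral_add_right _ measurable_const, lintegral_const, measure_univ, mul_one,
          lintegral_map (by fun_prop) hX]

theorem ofReal_mul_lintegral_add_le_of_ae {f g : Ω → ℝ} {M b w : ℝ} (hM : 0 ≤ M) (hb : 0 ≤ b)
    (hf : ∀ᵐ ω ∂μ, 0 ≤ f ω) (hfg : ∀ᵐ ω ∂μ, M * f ω + b ≤ g ω + w) :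
    ENNReal.ofReal M * ∫⁻ ω, ENNReal.ofReal (f ω) ∂μ + ENNReal.ofReal b
      ≤ ∫⁻ ω, ENNReal.ofReal (g ω) ∂μ + ENNReal.ofReal w := by
  have hpt : ∀ᵐ ω ∂μ, ENNReal.ofReal M * ENNReal.ofReal (f ω) + ENNReal.ofReal b
      ≤ ENNReal.ofReal (g ω) + ENNReal.ofReal w := by
    filter_upwards [hf, hfg] with ω hfω hfgω
    rw [← ENNReal.ofReal_mul hM, ← ENNReal.ofReal_add (mul_nonneg hM hfω) hb]
    exact (ENNReal.ofReal_le_ofReal hfgω).trans ENNReal.ofReal_add_le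
  calc ENNReal.ofReal M * ∫⁻ ω, ENNReal.ofReal (f ω) ∂μ + ENNReal.ofReal b
      = ∫⁻ ω, (ENNReal.ofReal M * ENNReal.ofReal (f ω) + ENNReal.ofReal b) ∂μ := by
        rw [lintegral_add_right _ measurable_const, lintegral_const_mul' _ _ ENNReal.ofReal_ne_top,
          lintegral_const, measure_univ, mul_one]
    _ ≤ ∫⁻ ω, (ENNReal.ofReal (g ω) + ENNReal.ofReal w) ∂μ := lintegral_mono_ae hpt
    _ = ∫⁻ ω, ENNReal.ofReal (g ω) ∂μ + ENNReal.ofReal w := by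
        rw [lintegral_add_right _ measurable_const, lintegral_const, measure_univ, mul_one]

end

theorem one_sub_mul_sq_sub_sq_div_le_add_sq {ε : ℝ} (hε : 0 < ε) (A B : ℝ) :
    (1 - ε) * A ^ 2 - B ^ 2 / ε ≤ (A + B) ^ 2 := by
  have h : ε * ((1 - ε) * A ^ 2 - (A + B) ^ 2) ≤ B ^ 2 := by
    nlinarith [sq_nonneg (ε * A + B), mul_nonneg hε.le (sq_nonneg B)]
  rw [sub_le_iff_le_add, ← sub_le_iff_le_add', le_div_iff₀ hε]
  linarith

theorem exp_half_le_one_sub_mul_exp_two_mul {x : ℝ} (hx₀ : 0 ≤ x) (hx₁ : x ≤ 2 / 3) :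
    exp (x / 2) ≤ (1 - 3 * x / 4) * exp (2 * x) := by
  have hsplit : exp (2 * x) = exp (3 * x / 2) * exp (x / 2) := by
    rw [← Real.exp_add]; ring_nf
  have hlin : 1 + 3 * x / 2 ≤ exp (3 * x / 2) := by linarith [Real.add_one_le_exp (3 * x / 2)]
  have hprod : 1 ≤ (1 - 3 * x / 4) * exp (3 * x / 2) :=
    calc 1 ≤ (1 - 3 * x / 4) * (1 + 3 * x / 2) := by nlinarith
      _ ≤ (1 - 3 * x / 4) * exp (3 * x / 2) := by gcongr; linarith
  rw [hsplit, ← mul_assoc]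
  exact le_mul_of_one_le_left (exp_pos _).le hprod

section StepCoefficients

variable {a dt : ℝ}

theorem add_mul_dtStar (ha : a ≠ 0) (q u : ℝ) :
    q + (a * q + u) * dtStar a dt = exp (a * dt) * q + dtStar a dt * u := by
  rw [dtStar, if_neg ha]
  field_simp
  ring

theorem dtStar_nonneg (ha : 0 < a) (hdt : 0 ≤ dt) : 0 ≤ dtStar a dt := by
  rw [dtStar, if_neg ha.ne']
  exact div_nonneg (by linarith [Real.one_le_exp (mul_nonneg ha.le hdt)]) ha.le

theorem dtStar_le_mul_exp (ha : 0 < a) (dt : ℝ) : dtStar a dt ≤ dt * exp (a * dt) := by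
  have h : exp (a * dt) * (1 - a * dt) ≤ 1 := by
    have := Real.add_one_le_exp (-(a * dt))
    rw [Real.exp_neg] at this
    nlinarith [exp_pos (a * dt), mul_inv_cancel₀ (exp_pos (a * dt)).ne']
  rw [dtStar, if_neg ha.ne', div_le_iff₀ ha]
  nlinarith

theorem le_dtTilde (ha : 0 < a) (dt : ℝ) : dt ≤ dtTilde a dt := by
  rw [dtTilde, if_neg ha.ne', le_div_iff₀ (by positivity)]
  linarith [Real.add_one_le_exp (2 * a * dt)]

end StepCoefficients

theorem sq_le_two_mul_sq_mul_of_abs_le {C q u : ℝ} (hu : |u| ≤ C * (|q| + 1)) :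
    u ^ 2 ≤ 2 * C ^ 2 * (q ^ 2 + 1) := by
  have h : u ^ 2 ≤ (C * (|q| + 1)) ^ 2 := by
    rw [← sq_abs u]; exact pow_le_pow_left₀ (abs_nonneg u) hu 2
  nlinarith [sq_abs q, sq_nonneg (|q| - 1)]

theorem exp_half_mul_sq_add_le {C a dt q u : ℝ} (hCa : 16 * (C ^ 2 + 1) ≤ a) (hdt : 0 < dt)
    (hlog : 2 * (a * dt) ≤ log 2) (hu : |u| ≤ C * (|q| + 1)) :
    exp (1 / 2 * a * dt) * q ^ 2 + 1 / 2 * dt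
      ≤ (exp (a * dt) * q + dtStar a dt * u) ^ 2 + dtTilde a dt := by
  have ha : 0 < a := by nlinarith
  set x := a * dt
  set E := exp x
  set s := dtStar a dt
  have hx₀ : 0 < x := mul_pos ha hdt
  have hdtx : 16 * dt ≤ x := by nlinarith
  have hx₁ : x ≤ 2 / 3 := by linarith [Real.log_two_lt_d9]
  have hE2 : E ^ 2 = exp (2 * x) := by rw [← Real.exp_nat_mul]; norm_num
  have hE2_le : E ^ 2 ≤ 2 := by
    rw [hE2]
    calc exp (2 * x) ≤ exp (log 2) := exp_le_exp.2 hlog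
      _ = 2 := Real.exp_log two_pos
  have hs₀ : 0 ≤ s := dtStar_nonneg ha hdt.le
  have hs : s ≤ dt * E := dtStar_le_mul_exp ha dt
  have hu2 := sq_le_two_mul_sq_mul_of_abs_le hu
  have herr : (s * u) ^ 2 / (x / 2) ≤ dt / 4 * E ^ 2 * (q ^ 2 + 1) := by
    rw [div_le_iff₀ (by positivity)]
    calc (s * u) ^ 2 = s ^ 2 * u ^ 2 := by ring
      _ ≤ (dt * E) ^ 2 * (2 * C ^ 2 * (q ^ 2 + 1)) := by gcongr
      _ ≤ (dt * E) ^ 2 * (a / 8 * (q ^ 2 + 1)) := by gcongr; nlinarith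
      _ = dt / 4 * E ^ 2 * (q ^ 2 + 1) * (x / 2) := by ring
  have hyoung := one_sub_mul_sq_sub_sq_div_le_add_sq (half_pos hx₀) (E * q) (s * u)
  have hgrowth : exp (1 / 2 * a * dt) ≤ (1 - 3 * x / 4) * E ^ 2 := by
    rw [hE2, show 1 / 2 * a * dt = x / 2 by ring]
    exact exp_half_le_one_sub_mul_exp_two_mul hx₀.le hx₁
  have hq : dt / 4 * E ^ 2 * q ^ 2 ≤ x / 4 * E ^ 2 * q ^ 2 := by gcongr; linarith
  have hdtE : dt / 4 * E ^ 2 ≤ dt / 2 := by nlinarith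
  linarith [le_dtTilde ha dt, mul_le_mul_of_nonneg_right hgrowth (sq_nonneg q)]

theorem sub_le_dtMax {N ν : ℕ} (t : ℕ → ℝ) (hν : ν < N) : t (ν + 1) - t ν ≤ dtMax N t :=
  le_ciSup (f := fun i : Fin N => t (i + 1) - t i) (Set.finite_range _).bddAbove ⟨ν, hν⟩

namespace TameProcess

variable {Ω : Type*} {mΩ : MeasurableSpace Ω} {μ : Measure Ω} {N : ℕ} {t : ℕ → ℝ}
  {a q0 Ct : ℝ} {F : Filtration ℕ mΩ} {q u ΔW : ℕ → Ω → ℝ}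

theorem indepFun_noise (hP : TameProcess μ N t a q0 Ct F q u ΔW) {ν : ℕ} (hν : ν < N)
    {X : Ω → ℝ} (hX : Measurable[F ν] X) : IndepFun X (ΔW ν) μ := by
  rw [IndepFun_iff_Indep]
  exact indep_of_indep_of_le_left (hP.w_indep ν hν).symm hX.comap_le

theorem ae_step_eq (hP : TameProcess μ N t a q0 Ct F q u ΔW) (ha : a ≠ 0) {ν : ℕ} (hν : ν < N) :
    ∀ᵐ ω ∂μ, q (ν + 1) ω = exp (a * (t (ν + 1) - t ν)) * q ν ω
      + dtStar a (t (ν + 1) - t ν) * u ν ω + ΔW ν ω := by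
  filter_upwards [hP.q_step ν hν] with ω hω
  rw [hω, add_mul_dtStar ha]

end TameProcess

/-- one-step exponential growth of `E[q_ν²]` under any tame strategy
when the parameter `a` is large positive. -/
theorem statement12 (Ct : ℝ) :
    ∃ Cstar > (0 : ℝ),
      ∀ a : ℝ, Cstar ≤ a →
      ∀ T : ℝ, 0 < T →
      ∃ δ > (0 : ℝ),
        ∀ (Ω : Type) (mΩ : MeasurableSpace Ω) (μ : Measure Ω), IsProbabilityMeasure μ →
        ∀ (N : ℕ), 1 ≤ N →
        ∀ (t : ℕ → ℝ), IsPartition N T t →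
        ∀ (q0 : ℝ) (F : Filtration ℕ mΩ) (q u ΔW : ℕ → Ω → ℝ),
          TameProcess μ N t a q0 Ct F q u ΔW →
          dtMax N t < δ →
          ∀ ν < N,
            ENNReal.ofReal (Real.exp ((1 / 2) * a * (t (ν + 1) - t ν))) *
                (∫⁻ ω, ENNReal.ofReal ((q ν ω) ^ 2) ∂μ)
              + ENNReal.ofReal ((1 / 2) * (t (ν + 1) - t ν))
            ≤ ∫⁻ ω, ENNReal.ofReal ((q (ν + 1) ω) ^ 2) ∂μ := by
  refine ⟨16 * (Ct ^ 2 + 1), by positivity, fun a hCa T _ => ?_⟩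
  have ha : 0 < a := by nlinarith
  refine ⟨log 2 / (2 * a), by positivity, ?_⟩
  intro Ω mΩ μ _ N _ t ⟨_, _, ht⟩ q0 F q u ΔW hP hδ ν hν
  set dt := t (ν + 1) - t ν
  have hdt : 0 < dt := sub_pos.2 (ht ν hν)
  have hlog : 2 * (a * dt) ≤ log 2 := by
    have := (sub_le_dtMax t hν).trans_lt hδ
    rw [lt_div_iff₀ (by positivity)] at this
    linarith
  set X := fun ω => exp (a * dt) * q ν ω + dtStar a dt * u ν ω
  have hXF : Measurable[F ν] X :=
    ((hP.q_meas ν hν.le).const_mul _).add ((hP.u_meas ν hν).const_mul _)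
  calc ENNReal.ofReal (exp (1 / 2 * a * dt)) * ∫⁻ ω, ENNReal.ofReal (q ν ω ^ 2) ∂μ
        + ENNReal.ofReal (1 / 2 * dt)
      ≤ ∫⁻ ω, ENNReal.ofReal (X ω ^ 2) ∂μ + ENNReal.ofReal (dtTilde a dt) :=
        ofReal_mul_lintegral_add_le_of_ae (exp_pos _).le (by positivity)
          (ae_of_all _ fun ω => sq_nonneg _) <| (hP.u_tame ν hν).mono fun ω hu =>
            exp_half_mul_sq_add_le hCa hdt hlog hu
    _ = ∫⁻ ω, ENNReal.ofReal ((X ω + ΔW ν ω) ^ 2) ∂μ := by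
        rw [lintegral_sq_add_of_indepFun_gaussianReal (hXF.mono (F.le ν) le_rfl)
          ((hP.w_meas ν hν).mono (F.le _) le_rfl) (hP.indepFun_noise hν hXF) (hP.w_law ν hν)]
        simp [dt]
    _ = ∫⁻ ω, ENNReal.ofReal (q (ν + 1) ω ^ 2) ∂μ :=
        lintegral_congr_ae <| (hP.ae_step_eq ha.ne' hν).mono fun ω h => by simp only [h]; rfl
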